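/- Let q ∈ (-1,1) and w = 1/2. If u, A, B, C satisfy the conditional-variance non-negativity at x = 2/√(1-q), z = -2/√(1-q) for the q-Gaussian triplet with ⟨f,h⟩ = ⟨g,h⟩ = 1/2 and ⟨f,g⟩ = u, i.e. (with a = (u - 1/4)/(3/4), b = (1/2 - u/2)/(3/4)): 1 - a² - b² - (ab/2)·((1+q)(3/4)+2(1-q))/(1-q/4) - (ab(1-q)/(1-q/4))·(z/2 - x)·(x/2 - z) ≥ 0 at that point, then u ≥ (q+5)/36. -/

import Mathlib

/-!
At `z = -x` the cross factor `(z/2 - x)(x/2 - z)` equals `-9x²/4 = -9/(1-q)`, so the `1 - q`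
cancels and the variance becomes `1 - a² - b² + (5q + 61)ab / (2(4 - q))`. Substituting the
correlations turns this into `(1 - u)(36u - q - 5)/(4 - q)`, and since `(q + 5)/36 < 1` the
factor `1 - u` cannot rescue a negative `36u - q - 5`.
-/

/-- Conditional variance of the q-Gaussian triplet with `w = 1/2` (whence `3/4 = 1 - w²`) and
regression coefficients `a`, `b`, at the point `(x, z)`. -/
noncomputable def condVariance (q a b x z : ℝ) : ℝ :=
  1 - a ^ 2 - b ^ 2
    - (a * b / 2) * ((1 + q) * (3/4) + 2 * (1 - q)) / (1 - q/4)
    - (a * b * (1 - q) / (1 - q/4)) * (z/2 - x) * (x/2 - z)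

theorem condVariance_boundary {q : ℝ} (hq : q < 1) (a b : ℝ) :
    condVariance q a b (2 / √(1 - q)) (-(2 / √(1 - q))) =
      1 - a ^ 2 - b ^ 2 + (5 * q + 61) * a * b / (2 * (4 - q)) := by
  have hpos : 0 < 1 - q := by linarith
  have hcross : (-(2 / √(1 - q)) / 2 - 2 / √(1 - q)) * (2 / √(1 - q) / 2 - -(2 / √(1 - q)))
      = -9 / (1 - q) := by
    rw [show ∀ x : ℝ, (-x / 2 - x) * (x / 2 - -x) = -9 / 4 * x ^ 2 by intro; ring,
      div_pow, Real.sq_sqrt hpos.le]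
    ring
  have h4 : 4 - q ≠ 0 := by linarith
  rw [condVariance, mul_assoc _ (_ - _), hcross]
  field_simp
  ring

theorem condVariance_correlations (q u : ℝ) (hq : q ≠ 4) :
    1 - ((u - 1/4) / (3/4)) ^ 2 - ((1/2 - u/2) / (3/4)) ^ 2
        + (5 * q + 61) * ((u - 1/4) / (3/4)) * ((1/2 - u/2) / (3/4)) / (2 * (4 - q)) =
      (1 - u) * (36 * u - (q + 5)) / (4 - q) := by
  have h4 : 4 - q ≠ 0 := sub_ne_zero.mpr hq.symm
  field_simp
  ring

theorem le_of_one_sub_mul_nonneg {c u : ℝ} (hc : c < 36) (h : 0 ≤ (1 - u) * (36 * u - c)) :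
    c / 36 ≤ u := by
  by_contra! hu
  nlinarith

theorem example_two_constraint_general (q u : ℝ) (hq' : q < 1)
    (a b x z : ℝ)
    (ha : a = (u - 1/4) / (3/4))
    (hb : b = (1/2 - u/2) / (3/4))
    (hx : x = 2 / Real.sqrt (1 - q))
    (hz : z = -x)
    (hvar : 1 - a ^ 2 - b ^ 2
        - (a * b / 2) * ((1 + q) * (3/4) + 2 * (1 - q)) / (1 - q/4)
        - (a * b * (1 - q) / (1 - q/4)) * (z/2 - x) * (x/2 - z) ≥ 0) :
    u ≥ (q + 5) / 36 := by
  subst ha hb hz hx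
  change 0 ≤ condVariance q _ _ _ _ at hvar
  rw [condVariance_boundary hq', condVariance_correlations q u (by linarith),
    le_div_iff₀ (by linarith), zero_mul] at hvar
  exact le_of_one_sub_mul_nonneg (by linarith) hvar

/-- Example 2: with correlations `⟨f,h⟩ = ⟨g,h⟩ = 1/2` and `⟨f,g⟩ = u`,
non-negativity of the conditional variance at the boundary point
`x = 2/√(1-q)`, `z = -x` forces `u ≥ (q+5)/36`. -/
theorem example_two_constraint (q u : ℝ) (hq : -1 < q) (hq' : q < 1)
    (a b x z : ℝ)
    (ha : a = (u - 1/4) / (3/4))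
    (hb : b = (1/2 - u/2) / (3/4))
    (hx : x = 2 / Real.sqrt (1 - q))
    (hz : z = -x)
    (hvar : 1 - a ^ 2 - b ^ 2
        - (a * b / 2) * ((1 + q) * (3/4) + 2 * (1 - q)) / (1 - q/4)
        - (a * b * (1 - q) / (1 - q/4)) * (z/2 - x) * (x/2 - z) ≥ 0) :
    u ≥ (q + 5) / 36 :=
  example_two_constraint_general q u hq' a b x z ha hb hx hz hvar
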